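/- For any unital qubit quantum channel Φ ∈ C(ℂ²) and any p ∈ [0,1], the von Neumann entropy of the channel output on the entangled input is symmetric in p: H((Φ⊗id)(φ_P)) = H((Φ⊗id)(φ_Q)), where φ_P corresponds to Schmidt coefficients (p, 1−p) and φ_Q to (1−p, p). -/

import Mathlib

open Matrix Kronecker
open scoped BigOperators ComplexOrder Classical

noncomputable section

/-- Matrix logarithm of a Hermitian matrix, taken on the support
(`Real.log 0 = 0` implements the convention `log 0 = 0` on eigenvalues). -/
def matLog {n : Type*} [Fintype n] [DecidableEq n] (A : Matrix n n ℂ) : Matrix n n ℂ :=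
  if hA : A.IsHermitian then
    (hA.eigenvectorUnitary : Matrix n n ℂ) *
      Matrix.diagonal (fun i => (Real.log (hA.eigenvalues i) : ℂ)) *
      star (hA.eigenvectorUnitary : Matrix n n ℂ)
  else 0

/-- von Neumann entropy `H(ρ) = -Tr (ρ log ρ)`. -/
def vonNeumann {n : Type*} [Fintype n] [DecidableEq n] (ρ : Matrix n n ℂ) : ℝ :=
  -((ρ * matLog ρ).trace.re)

/-- A density matrix: positive semidefinite with unit trace. -/
def IsDensityMatrix {n : Type*} [Fintype n] [DecidableEq n] (ρ : Matrix n n ℂ) : Prop :=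
  ρ.PosSemidef ∧ ρ.trace = 1

/-- Support (range) inclusion, `supp ρ ⊆ supp σ`. -/
def SuppLE {n : Type*} [Fintype n] [DecidableEq n] (ρ σ : Matrix n n ℂ) : Prop :=
  LinearMap.range ρ.mulVecLin ≤ LinearMap.range σ.mulVecLin

/-- Quantum relative entropy `D(ρ‖σ) = Tr ρ (log ρ - log σ)` when
`supp ρ ⊆ supp σ`, and `+∞` otherwise. -/
def relEnt {n : Type*} [Fintype n] [DecidableEq n] (ρ σ : Matrix n n ℂ) : EReal :=
  if SuppLE ρ σ then (((ρ * (matLog ρ - matLog σ)).trace.re : ℝ) : EReal) else ⊤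

/-- The extension `Φ ⊗ id` of a map on matrices, acting on bipartite matrices. -/
def extendId {a b k : ℕ} (Φ : Matrix (Fin a) (Fin a) ℂ →ₗ[ℂ] Matrix (Fin b) (Fin b) ℂ)
    (M : Matrix (Fin a × Fin k) (Fin a × Fin k) ℂ) :
    Matrix (Fin b × Fin k) (Fin b × Fin k) ℂ :=
  Matrix.of fun p q => Φ (Matrix.of fun r s => M (r, p.2) (s, q.2)) p.1 q.1

/-- Complete positivity of a map on matrices. -/
def IsCompletelyPositive {a b : ℕ}
    (Φ : Matrix (Fin a) (Fin a) ℂ →ₗ[ℂ] Matrix (Fin b) (Fin b) ℂ) : Prop :=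
  ∀ k : ℕ, ∀ M : Matrix (Fin a × Fin k) (Fin a × Fin k) ℂ,
    M.PosSemidef → (extendId Φ M).PosSemidef

/-- A quantum channel: a completely positive trace-preserving linear map. -/
structure QChannel (a b : ℕ) where
  map : Matrix (Fin a) (Fin a) ℂ →ₗ[ℂ] Matrix (Fin b) (Fin b) ℂ
  cp : IsCompletelyPositive map
  tp : ∀ M, (map M).trace = M.trace

/-- The (unnormalized) maximally entangled projector `|φ⁺⟩⟨φ⁺|`, `|φ⁺⟩ = ∑ᵢ |ii⟩`. -/
def maxEnt (d : ℕ) : Matrix (Fin d × Fin d) (Fin d × Fin d) ℂ :=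
  Matrix.of fun p q => if p.1 = p.2 ∧ q.1 = q.2 then 1 else 0

/-- The Choi matrix `D_Φ = (Φ ⊗ id)(|φ⁺⟩⟨φ⁺|)`. -/
def choiOf {a b : ℕ} (Φ : Matrix (Fin a) (Fin a) ℂ →ₗ[ℂ] Matrix (Fin b) (Fin b) ℂ) :
    Matrix (Fin b × Fin a) (Fin b × Fin a) ℂ :=
  extendId Φ (maxEnt a)

/-- The Choi–Jamiołkowski state `J_Φ = D_Φ / d`. -/
def jamState {a b : ℕ} (Φ : Matrix (Fin a) (Fin a) ℂ →ₗ[ℂ] Matrix (Fin b) (Fin b) ℂ) :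
    Matrix (Fin b × Fin a) (Fin b × Fin a) ℂ :=
  ((a : ℂ))⁻¹ • choiOf Φ

/-- The map entropy `H^K(Φ) = H(J_Φ)`. -/
def mapEntropy {a b : ℕ} (Φ : Matrix (Fin a) (Fin a) ℂ →ₗ[ℂ] Matrix (Fin b) (Fin b) ℂ) : ℝ :=
  vonNeumann (jamState Φ)

/-- The completely depolarizing channel `R(ρ) = (Tr ρ) I / dim`. -/
def depolMap (a b : ℕ) : Matrix (Fin a) (Fin a) ℂ →ₗ[ℂ] Matrix (Fin b) (Fin b) ℂ where
  toFun M := M.trace • ((b : ℂ))⁻¹ • (1 : Matrix (Fin b) (Fin b) ℂ)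
  map_add' M N := by simp [Matrix.trace_add, add_smul]
  map_smul' c M := by simp [Matrix.trace_smul, smul_smul, mul_assoc]

/-- A pure state (rank-one projector onto a unit vector). -/
def IsPureState {n : Type*} [Fintype n] (ψ : Matrix n n ℂ) : Prop :=
  ∃ v : n → ℂ, (∑ i, Complex.normSq (v i)) = 1 ∧
    ψ = Matrix.of fun i j => v i * (starRingEnd ℂ) (v j)

/-- The channel relative entropy `D(Φ‖R)`: the supremum over bipartite pure
input states (on `X_A ⊗ X_R`, `X_R ≅ X_A`) of the relative entropy of the
output of the extended channel relative to the output of the extended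
completely depolarizing channel. -/
def relEntChannel {a b : ℕ} (Φ : QChannel a b) : EReal :=
  ⨆ ψ : {ψ : Matrix (Fin a × Fin a) (Fin a × Fin a) ℂ // IsPureState ψ},
    relEnt (extendId Φ.map ψ.1) (extendId (depolMap a b) ψ.1)

/-- The Gour–Wilde entropy of a quantum channel, `H(Φ) = log dim X_B - D(Φ‖R)`. -/
def gwEntropy {a b : ℕ} (Φ : QChannel a b) : EReal :=
  ((Real.log b : ℝ) : EReal) - relEntChannel Φ

/-- The vector `√p |00⟩ + √(1-p) |11⟩`. -/
def psiP (p : ℝ) : Fin 2 × Fin 2 → ℂ := fun x =>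
  if x.1 = 0 ∧ x.2 = 0 then ((Real.sqrt p : ℝ) : ℂ)
  else if x.1 = 1 ∧ x.2 = 1 then ((Real.sqrt (1 - p) : ℝ) : ℂ) else 0

/-- The two-qubit pure state `φ_P = |ψ_P⟩⟨ψ_P|` with `|ψ_P⟩ = √p|00⟩ + √(1-p)|11⟩`. -/
def phiP (p : ℝ) : Matrix (Fin 2 × Fin 2) (Fin 2 × Fin 2) ℂ :=
  Matrix.of fun x y => psiP p x * (starRingEnd ℂ) (psiP p y)

/-- `√P = diag(√p, √(1-p))`. -/
def sqrtP (p : ℝ) : Matrix (Fin 2) (Fin 2) ℂ :=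
  Matrix.diagonal ![((Real.sqrt p : ℝ) : ℂ), ((Real.sqrt (1 - p) : ℝ) : ℂ)]

/-! For 2 × 2 matrices `adjugate A = tr A • 1 - A = ε Aᵀ εᵀ`, so a unital trace-preserving
map commutes with the adjugate. Consequently `Φ ⊗ id` commutes with the spin flip
`M ↦ (ε ⊗ ε) Mᵀ (ε ⊗ ε)ᵀ`, which exchanges `φ_P` and `φ_Q`. The spin flip is a similarity
followed by a transpose, so it preserves the characteristic polynomial, hence the spectrum and
the entropy. -/

section SpinFlip

variable {R : Type*} [CommRing R]

def epsilon : Matrix (Fin 2) (Fin 2) R := !![0, 1; -1, 0]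

lemma epsilon_transpose_mul_self : (epsilon : Matrix (Fin 2) (Fin 2) R)ᵀ * epsilon = 1 := by
  ext i j; fin_cases i <;> fin_cases j <;> simp [epsilon, mul_apply, Fin.sum_univ_two]

lemma adjugate_fin_two_eq_trace_smul_one_sub (A : Matrix (Fin 2) (Fin 2) R) :
    A.adjugate = A.trace • 1 - A := by
  ext i j; fin_cases i <;> fin_cases j <;> simp [adjugate_fin_two, trace_fin_two]

lemma map_adjugate_of_map_one_of_trace
    {Φ : Matrix (Fin 2) (Fin 2) R →ₗ[R] Matrix (Fin 2) (Fin 2) R} (hU : Φ 1 = 1)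
    (hT : ∀ A, (Φ A).trace = A.trace) (A : Matrix (Fin 2) (Fin 2) R) :
    Φ A.adjugate = (Φ A).adjugate := by
  rw [adjugate_fin_two_eq_trace_smul_one_sub, adjugate_fin_two_eq_trace_smul_one_sub, map_sub,
    map_smul, hU, hT]

def rightBlock {m m' n n' : Type*} (M : Matrix (m × n) (m' × n') R) (j : n) (j' : n') :
    Matrix m m' R :=
  of fun r s => M (r, j) (s, j')

def spinFlip (M : Matrix (Fin 2 × Fin 2) (Fin 2 × Fin 2) R) :
    Matrix (Fin 2 × Fin 2) (Fin 2 × Fin 2) R :=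
  (epsilon ⊗ₖ epsilon) * Mᵀ * (epsilon ⊗ₖ epsilon)ᵀ

lemma charpoly_spinFlip (M : Matrix (Fin 2 × Fin 2) (Fin 2 × Fin 2) R) :
    (spinFlip M).charpoly = M.charpoly := by
  rw [spinFlip, charpoly_mul_comm, ← Matrix.mul_assoc, ← kroneckerMap_transpose,
    ← mul_kronecker_mul, epsilon_transpose_mul_self, one_kronecker_one, Matrix.one_mul,
    charpoly_transpose]

lemma rightBlock_spinFlip (M : Matrix (Fin 2 × Fin 2) (Fin 2 × Fin 2) R) (i j : Fin 2) :
    rightBlock (spinFlip M) i j =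
      ∑ b, ∑ d, (epsilon i b * epsilon j d : R) • (rightBlock M d b).adjugate := by
  ext r s
  fin_cases i <;> fin_cases j <;> fin_cases r <;> fin_cases s <;>
    simp [spinFlip, rightBlock, epsilon, mul_apply, Fintype.sum_prod_type,
      Fin.sum_univ_two, adjugate_fin_two]

end SpinFlip

lemma phiP_one_sub (p : ℝ) : phiP (1 - p) = spinFlip (phiP p) := by
  ext ⟨a, b⟩ ⟨c, d⟩
  fin_cases a <;> fin_cases b <;> fin_cases c <;> fin_cases d <;>
    simp [phiP, psiP, spinFlip, epsilon, mul_apply, Fintype.sum_prod_type, Fin.sum_univ_two,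
      mul_comm]

lemma extendId_spinFlip {Φ : Matrix (Fin 2) (Fin 2) ℂ →ₗ[ℂ] Matrix (Fin 2) (Fin 2) ℂ}
    (hΦ : ∀ A, Φ A.adjugate = (Φ A).adjugate) (M : Matrix (Fin 2 × Fin 2) (Fin 2 × Fin 2) ℂ) :
    extendId Φ (spinFlip M) = spinFlip (extendId Φ M) := by
  have hblock : ∀ i j, rightBlock (extendId Φ M) i j = Φ (rightBlock M i j) := fun _ _ => rfl
  ext ⟨k, i⟩ ⟨l, j⟩
  change Φ (rightBlock (spinFlip M) i j) k l = rightBlock (spinFlip (extendId Φ M)) i j k l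
  simp only [rightBlock_spinFlip, map_sum, map_smul, hΦ, hblock]

lemma vonNeumann_eq_neg_sum_eigenvalues {n : Type*} [Fintype n] [DecidableEq n]
    {ρ : Matrix n n ℂ} (hρ : ρ.IsHermitian) :
    vonNeumann ρ = -∑ i, hρ.eigenvalues i * Real.log (hρ.eigenvalues i) := by
  have hmul : ρ * matLog ρ = Unitary.conjStarAlgAut ℂ _ hρ.eigenvectorUnitary
      (diagonal (RCLike.ofReal ∘ hρ.eigenvalues) *
        diagonal (fun i => (Real.log (hρ.eigenvalues i) : ℂ))) := by
    rw [map_mul, ← hρ.spectral_theorem, matLog, dif_pos hρ]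
    rfl
  rw [vonNeumann, hmul, Unitary.conjStarAlgAut_apply, trace_mul_cycle, Unitary.coe_star_mul_self,
    Matrix.one_mul, diagonal_mul_diagonal, trace_diagonal, Complex.re_sum]
  simp [← Complex.ofReal_mul]

lemma vonNeumann_eq_of_charpoly_eq {n : Type*} [Fintype n] [DecidableEq n]
    {A B : Matrix n n ℂ} (hA : A.IsHermitian) (hB : B.IsHermitian)
    (h : A.charpoly = B.charpoly) : vonNeumann A = vonNeumann B := by
  rw [vonNeumann_eq_neg_sum_eigenvalues hA, vonNeumann_eq_neg_sum_eigenvalues hB,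
    (hA.eigenvalues_eq_eigenvalues_iff hB).2 h]

lemma phiP_posSemidef (p : ℝ) : (phiP p).PosSemidef :=
  posSemidef_vecMulVec_self_star (psiP p)

theorem vonNeumann_extend_phiP_symm_general (Φ : QChannel 2 2) (hU : Φ.map 1 = 1) (p : ℝ) :
    vonNeumann (extendId Φ.map (phiP p)) = vonNeumann (extendId Φ.map (phiP (1 - p))) := by
  have hρ := (Φ.cp 2 _ (phiP_posSemidef p)).isHermitian
  have hρ' := (Φ.cp 2 _ (phiP_posSemidef (1 - p))).isHermitian
  rw [phiP_one_sub, extendId_spinFlip (map_adjugate_of_map_one_of_trace hU Φ.tp)] at hρ' ⊢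
  exact vonNeumann_eq_of_charpoly_eq hρ hρ' (charpoly_spinFlip _).symm

/-- For any unital qubit quantum channel `Φ ∈ C(ℂ²)` and `p ∈ [0,1]`,
the output entropy is symmetric in `p`: `H((Φ⊗id)(φ_P)) = H((Φ⊗id)(φ_Q))`, where
`φ_Q` has Schmidt coefficients `(1-p, p)`, i.e. `φ_Q = φ_{P}` at parameter `1-p`. -/
theorem vonNeumann_extend_phiP_symm (Φ : QChannel 2 2) (hU : Φ.map 1 = 1) (p : ℝ)
    (hp : p ∈ Set.Icc (0 : ℝ) 1) :
    vonNeumann (extendId Φ.map (phiP p)) = vonNeumann (extendId Φ.map (phiP (1 - p))) :=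
  vonNeumann_extend_phiP_symm_general Φ hU p
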